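/- The norm on 𝒮_Y(c₀) is power multiplicative: for every H = αId + T_λ ∈ 𝒮_Y(c₀) and every n ∈ ℕ, ‖Hⁿ‖ = ‖H‖ⁿ. -/

import Mathlib

open Filter Topology

noncomputable section

/-- `c₀(ℕ, K)`: the space of `K`-valued null sequences (zero-at-infinity functions on
discrete `ℕ`), with the supremum norm. -/
abbrev Cz (K : Type) [NontriviallyNormedField K] := ZeroAtInftyContinuousMap ℕ K

/-- The canonical bilinear form `⟨x, y⟩ = ∑ᵢ xᵢ yᵢ` on `c₀`. -/
def pr {K : Type} [NontriviallyNormedField K] (x y : Cz K) : K := ∑' i, x i * y i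

/-- The canonical basis vector `eᵢ` of `c₀`. -/
def e (K : Type) [NontriviallyNormedField K] (i : ℕ) : Cz K where
  toFun := fun j => if j = i then (1 : K) else 0
  continuous_toFun := continuous_of_discreteTopology
  zero_at_infty' := by
    rw [cocompact_eq_atTop (α := ℕ)]
    apply tendsto_nhds_of_eventually_eq
    filter_upwards [eventually_gt_atTop i] with j hj
    simp [hj.ne']

/-- A continuous linear operator on `c₀` is compact iff it is a uniform limit of
finite-rank continuous operators (equivalently, it maps the unit ball to a compactoid). -/
def IsCompactOp {K : Type} [NontriviallyNormedField K] (T : Cz K →L[K] Cz K) : Prop :=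
  ∀ ε : ℝ, 0 < ε → ∃ S : Cz K →L[K] Cz K,
    Module.Finite K (LinearMap.range (S : Cz K →ₗ[K] Cz K)) ∧ ‖T - S‖ ≤ ε

/-- The closed unit ball of a non-archimedean valued field, as a subring
(the valuation ring). -/
def valRing {K : Type} [NontriviallyNormedField K]
    (hna : IsNonarchimedean (norm : K → ℝ)) : Subring K where
  carrier := {x : K | ‖x‖ ≤ 1}
  mul_mem' := fun {a b} ha hb => by
    simp only [Set.mem_setOf_eq] at *
    rw [norm_mul]
    nlinarith [norm_nonneg a, norm_nonneg b]
  one_mem' := by simp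
  add_mem' := fun {a b} ha hb => by
    simp only [Set.mem_setOf_eq] at *
    exact (hna a b).trans (max_le ha hb)
  zero_mem' := by simp
  neg_mem' := fun {a} ha => by simpa using ha

/-- The maximal ideal (open unit ball) of the valuation ring. -/
def valIdeal {K : Type} [NontriviallyNormedField K]
    (hna : IsNonarchimedean (norm : K → ℝ)) : Ideal (valRing hna) where
  carrier := {x | ‖(x : K)‖ < 1}
  add_mem' := fun {a b} ha hb => by
    simp only [Set.mem_setOf_eq] at *
    push_cast
    exact ((hna a b)).trans_lt (max_lt ha hb)
  zero_mem' := by simp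
  smul_mem' := fun c x hx => by
    simp only [Set.mem_setOf_eq, smul_eq_mul] at *
    push_cast
    rw [norm_mul]
    calc ‖(c : K)‖ * ‖(x : K)‖ ≤ 1 * ‖(x : K)‖ := by
          exact mul_le_mul_of_nonneg_right c.2 (norm_nonneg _)
      _ = ‖(x : K)‖ := one_mul _
      _ < 1 := hx

/-- The residue class field of a non-archimedean valued field. -/
abbrev Residue {K : Type} [NontriviallyNormedField K]
    (hna : IsNonarchimedean (norm : K → ℝ)) : Type :=
  valRing hna ⧸ valIdeal hna

/-- A commutative ring is formally real if `-1` is not a sum of squares. -/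
def FormallyRealRing (R : Type) [CommRing R] : Prop :=
  ¬ ∃ (n : ℕ) (a : Fin n → R), (∑ i, a i ^ 2) = -1

/-! The vectors `y j` are eigenvectors of `H = α • 1 + ∑' i, λ i • P i` with eigenvalues
`α + λ j`, and `‖H‖ ≤ max ‖α‖ ‖λ‖` by the ultrametric inequality. Both facts rest on
`‖⟨x, x⟩‖ = ‖x‖²` in `c₀`, which is where the formally real residue field enters: a finite sum
of squares of elements of the unit ball, one of which is `1`, cannot lie in the maximal ideal.
Since `λ` is a null sequence, the bound `max ‖α‖ ‖λ‖` is attained as `‖α + λ j‖` for some `j`,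
and an operator whose norm is the modulus of one of its eigenvalues satisfies `‖Hⁿ‖ = ‖H‖ⁿ`. -/

theorem ContinuousLinearMap.norm_pow_eq_pow_norm_of_apply_eq_smul {𝕜 E : Type*}
    [NontriviallyNormedField 𝕜] [NormedAddCommGroup E] [NormedSpace 𝕜 E]
    {H : E →L[𝕜] E} {v : E} {μ : 𝕜} (hv : v ≠ 0) (hHv : H v = μ • v) (hH : ‖H‖ ≤ ‖μ‖)
    (n : ℕ) : ‖H ^ n‖ = ‖H‖ ^ n := by
  have : Nontrivial E := ⟨⟨v, 0, hv⟩⟩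
  have hpow : (H ^ n) v = μ ^ n • v := by
    induction n with
    | zero => simp
    | succ k ih => rw [pow_succ', mul_apply_eq_comp, ih, map_smul, hHv, smul_smul,
        pow_succ]
  have hlow : ‖μ‖ ^ n ≤ ‖H ^ n‖ := by
    have h := (H ^ n).le_opNorm v
    rw [hpow, norm_smul, norm_pow] at h
    exact le_of_mul_le_mul_right h (norm_pos_iff.2 hv)
  exact le_antisymm (norm_pow_le H n) ((pow_le_pow_left₀ (norm_nonneg _) hH n).trans hlow)

theorem ContinuousLinearMap.tsum_apply {𝕜 E F ι : Type*} [NontriviallyNormedField 𝕜]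
    [NormedAddCommGroup E] [NormedSpace 𝕜 E] [NormedAddCommGroup F] [NormedSpace 𝕜 F]
    {f : ι → E →L[𝕜] F} (hf : Summable f) (x : E) : (∑' i, f i) x = ∑' i, f i x :=
  (apply 𝕜 F x).map_tsum hf

theorem ContinuousLinearMap.norm_smul_one_add_le_max {𝕜 E : Type*} [NontriviallyNormedField 𝕜]
    [NormedAddCommGroup E] [NormedSpace 𝕜 E] [IsUltrametricDist E] (α : 𝕜) (T : E →L[𝕜] E) :
    ‖α • (1 : E →L[𝕜] E) + T‖ ≤ max ‖α‖ ‖T‖ := by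
  refine opNorm_le_bound _ ((norm_nonneg α).trans (le_max_left _ _)) fun x => ?_
  calc ‖α • x + T x‖ ≤ max ‖α • x‖ ‖T x‖ := IsUltrametricDist.norm_add_le_max _ _
    _ ≤ max (‖α‖ * ‖x‖) (‖T‖ * ‖x‖) := max_le_max (norm_smul α x).le (T.le_opNorm x)
    _ = max ‖α‖ ‖T‖ * ‖x‖ := (max_mul_of_nonneg _ _ (norm_nonneg x)).symm

theorem FormallyRealRing.sum_sq_ne_neg_one {R ι : Type} [CommRing R] (hR : FormallyRealRing R)
    (s : Finset ι) (b : ι → R) : ∑ i ∈ s, b i ^ 2 ≠ -1 := fun h =>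
  hR ⟨s.card, fun k => b (s.equivFin.symm k), by
    rw [← h, ← s.sum_coe_sort]
    exact Equiv.sum_comp s.equivFin.symm fun i : s => b i ^ 2⟩

theorem FormallyRealRing.sum_sq_ne_zero {R ι : Type} [CommRing R] (hR : FormallyRealRing R)
    {s : Finset ι} {b : ι → R} {j : ι} (hj : j ∈ s) (hbj : b j = 1) :
    ∑ i ∈ s, b i ^ 2 ≠ 0 := by
  classical
  rw [← s.add_sum_erase _ hj, hbj, one_pow]
  exact fun h => hR.sum_sq_ne_neg_one _ _ (eq_neg_of_add_eq_zero_right h)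

section Residue

variable {K : Type} [NontriviallyNormedField K]

theorem one_le_norm_sum_sq_of_eq_one (hna : IsNonarchimedean (norm : K → ℝ))
    (hres : FormallyRealRing (Residue hna)) {ι : Type} {s : Finset ι} {w : ι → valRing hna}
    {j : ι} (hj : j ∈ s) (hwj : w j = 1) : 1 ≤ ‖∑ i ∈ s, (w i : K) ^ 2‖ := by
  by_contra! hlt
  have hmem : ∑ i ∈ s, w i ^ 2 ∈ valIdeal hna := by
    change ‖((∑ i ∈ s, w i ^ 2 : valRing hna) : K)‖ < 1
    push_cast
    exact hlt
  refine hres.sum_sq_ne_zero (b := Ideal.Quotient.mk _ ∘ w) hj (by simp [hwj]) ?_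
  simpa only [Function.comp_apply, ← map_pow, ← map_sum] using
    Ideal.Quotient.eq_zero_iff_mem.2 hmem

theorem norm_sq_le_norm_sum_sq (hna : IsNonarchimedean (norm : K → ℝ))
    (hres : FormallyRealRing (Residue hna)) {ι : Type} {s : Finset ι} {a : ι → K} {j : ι}
    (hj : j ∈ s) (hmax : ∀ i ∈ s, ‖a i‖ ≤ ‖a j‖) : ‖a j‖ ^ 2 ≤ ‖∑ i ∈ s, a i ^ 2‖ := by
  classical
  rcases eq_or_ne (a j) 0 with h0 | h0
  · simp [h0]
  have hdiv_le_one : ∀ i ∈ s, ‖a i / a j‖ ≤ 1 := fun i hi => by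
    rw [norm_div, div_le_one (norm_pos_iff.2 h0)]
    exact hmax i hi
  let w : ι → valRing hna := fun i => if hi : i ∈ s then ⟨a i / a j, hdiv_le_one i hi⟩ else 0
  have hsum : ∑ i ∈ s, a i ^ 2 = a j ^ 2 * ∑ i ∈ s, (w i : K) ^ 2 := by
    rw [Finset.mul_sum]
    refine Finset.sum_congr rfl fun i hi => ?_
    simp only [w, dif_pos hi]
    field_simp
  have hwj : w j = 1 := Subtype.ext (by simp [w, dif_pos hj, div_self h0])
  rw [hsum, norm_mul, norm_pow]
  exact le_mul_of_one_le_right (by positivity) (one_le_norm_sum_sq_of_eq_one hna hres hj hwj)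

end Residue

namespace Cz

variable {K : Type} [NontriviallyNormedField K]

theorem norm_apply_le (f : Cz K) (i : ℕ) : ‖f i‖ ≤ ‖f‖ := by
  rw [← ZeroAtInftyContinuousMap.norm_toBCF_eq_norm]
  exact f.toBCF.norm_coe_le_norm i

theorem norm_le_of_forall_le (f : Cz K) {C : ℝ} (hC : 0 ≤ C) (h : ∀ i, ‖f i‖ ≤ C) :
    ‖f‖ ≤ C := by
  rw [← ZeroAtInftyContinuousMap.norm_toBCF_eq_norm]
  exact (BoundedContinuousFunction.norm_le hC).2 h

theorem tendsto_cofinite_zero (f : Cz K) : Tendsto f cofinite (𝓝 0) := by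
  simpa [cocompact_eq_atTop, ← Nat.cofinite_eq_atTop] using f.zero_at_infty'

theorem exists_norm_apply_eq (f : Cz K) : ∃ i, ‖f i‖ = ‖f‖ := by
  obtain ⟨i, hi⟩ : ∃ i, ∀ j, ‖f j‖ ≤ ‖f i‖ := by
    by_cases hf : ∀ j, f j = 0
    · exact ⟨0, fun j => by simp [hf]⟩
    push Not at hf
    obtain ⟨i₀, hi₀⟩ := hf
    exact (continuous_norm.comp f.continuous).exists_forall_ge' i₀
      ((tendsto_norm_zero.comp f.zero_at_infty').eventually (ge_mem_nhds (norm_pos_iff.2 hi₀)))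
  exact ⟨i, le_antisymm (norm_apply_le f i) (norm_le_of_forall_le f (norm_nonneg _) hi)⟩

instance [IsUltrametricDist K] : IsUltrametricDist (Cz K) :=
  IsUltrametricDist.isUltrametricDist_of_isNonarchimedean_norm fun f g =>
    norm_le_of_forall_le _ ((norm_nonneg f).trans (le_max_left _ _)) fun i =>
      (IsUltrametricDist.norm_add_le_max (f i) (g i)).trans
        (max_le_max (norm_apply_le f i) (norm_apply_le g i))

theorem exists_max_norm_le_norm_add_apply [IsUltrametricDist K] (α : K) (x : Cz K) :
    ∃ j, max ‖α‖ ‖x‖ ≤ ‖α + x j‖ := by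
  obtain ⟨j, hj⟩ := exists_norm_apply_eq x
  rcases lt_or_ge ‖α‖ ‖x‖ with hlt | hle
  · refine ⟨j, ?_⟩
    rw [IsUltrametricDist.norm_add_eq_max_of_norm_ne_norm (hj ▸ hlt.ne), hj]
  rcases eq_or_ne α 0 with rfl | hα
  · exact ⟨j, by simp [hj]⟩
  obtain ⟨k, hk⟩ :=
    ((tendsto_norm_zero.comp (tendsto_cofinite_zero x)).eventually
      (gt_mem_nhds (norm_pos_iff.2 hα))).exists
  refine ⟨k, ?_⟩
  rw [IsUltrametricDist.norm_add_eq_max_of_norm_ne_norm hk.ne', max_eq_left hle]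
  exact le_max_left _ _

end Cz

section InnerProduct

variable {K : Type} [NontriviallyNormedField K]

theorem norm_pr_le [IsUltrametricDist K] (x y : Cz K) : ‖pr x y‖ ≤ ‖x‖ * ‖y‖ :=
  IsUltrametricDist.norm_tsum_le_of_forall_le_of_nonneg (by positivity) fun i => by
    rw [norm_mul]
    exact mul_le_mul (Cz.norm_apply_le x i) (Cz.norm_apply_le y i) (norm_nonneg _) (norm_nonneg _)

theorem summable_mul_apply [IsUltrametricDist K] [CompleteSpace K] (x y : Cz K) :
    Summable fun i => x i * y i := by
  refine NonarchimedeanAddGroup.summable_of_tendsto_cofinite_zero (squeeze_zero_norm (fun i => ?_)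
    (by simpa using (Cz.tendsto_cofinite_zero x).norm.mul_const ‖y‖))
  rw [norm_mul]
  exact mul_le_mul_of_nonneg_left (Cz.norm_apply_le y i) (norm_nonneg _)

theorem norm_pr_self [CompleteSpace K] (hna : IsNonarchimedean (norm : K → ℝ))
    (hres : FormallyRealRing (Residue hna)) (x : Cz K) : ‖pr x x‖ = ‖x‖ ^ 2 := by
  have := IsUltrametricDist.isUltrametricDist_of_isNonarchimedean_norm hna
  refine le_antisymm (sq ‖x‖ ▸ norm_pr_le x x) ?_
  rcases (norm_nonneg x).eq_or_lt with hx | hx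
  · simp [← hx]
  obtain ⟨j, hj⟩ := Cz.exists_norm_apply_eq x
  -- the finitely many coordinates of size at least `‖x‖ / 2` dominate `⟨x, x⟩`
  have hfin : {i | ‖x‖ / 2 ≤ ‖x i‖}.Finite := by
    simpa only [not_lt, Function.comp_apply] using eventually_cofinite.1
      ((tendsto_norm_zero.comp (Cz.tendsto_cofinite_zero x)).eventually (gt_mem_nhds (half_pos hx)))
  set s := hfin.toFinset
  have hjs : j ∈ s := by
    simp only [s, Set.Finite.mem_toFinset, Set.mem_ofPred_eq, hj]
    linarith
  have hhead : ‖x‖ ^ 2 ≤ ‖∑ i ∈ s, x i ^ 2‖ :=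
    hj ▸ norm_sq_le_norm_sum_sq hna hres hjs fun i _ => hj ▸ Cz.norm_apply_le x i
  have htail : ‖∑' i : ((s : Set ℕ)ᶜ : Set ℕ), x i ^ 2‖ < ‖x‖ ^ 2 := by
    refine lt_of_le_of_lt (IsUltrametricDist.norm_tsum_le_of_forall_le_of_nonneg
      (C := (‖x‖ / 2) ^ 2) (by positivity) fun i => ?_) (by nlinarith)
    have hi : ‖x i‖ < ‖x‖ / 2 := by simpa [s] using i.2
    rw [norm_pow]
    exact pow_le_pow_left₀ (norm_nonneg _) hi.le 2
  have hsplit : pr x x = ∑ i ∈ s, x i ^ 2 + ∑' i : ((s : Set ℕ)ᶜ : Set ℕ), x i ^ 2 := by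
    simp only [pr, ← sq]
    exact ((summable_mul_apply x x).congr fun i => sq (x i) |>.symm).sum_add_tsum_compl.symm
  rw [hsplit, IsUltrametricDist.norm_add_eq_max_of_norm_ne_norm (htail.trans_le hhead).ne']
  exact hhead.trans (le_max_left _ _)

end InnerProduct

section Projections

variable {K : Type} [NontriviallyNormedField K] [CompleteSpace K]

theorem norm_pr_div_smul_le (hna : IsNonarchimedean (norm : K → ℝ))
    (hres : FormallyRealRing (Residue hna)) (x u : Cz K) : ‖(pr x u / pr u u) • u‖ ≤ ‖x‖ := by
  have := IsUltrametricDist.isUltrametricDist_of_isNonarchimedean_norm hna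
  rcases eq_or_ne u 0 with rfl | hu
  · simp
  have hu' : 0 < ‖u‖ := norm_pos_iff.2 hu
  rw [norm_smul, norm_div, norm_pr_self hna hres, div_mul_eq_mul_div, div_le_iff₀ (by positivity)]
  calc ‖pr x u‖ * ‖u‖ ≤ ‖x‖ * ‖u‖ * ‖u‖ := by gcongr; exact norm_pr_le x u
    _ = ‖x‖ * ‖u‖ ^ 2 := by ring

theorem tsum_smul_apply_eq_smul_of_orthogonal (hna : IsNonarchimedean (norm : K → ℝ))
    (hres : FormallyRealRing (Residue hna)) {y : ℕ → Cz K}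
    (hy : ∀ i j, i ≠ j → pr (y i) (y j) = 0) {j : ℕ} (hyj : y j ≠ 0)
    {P : ℕ → (Cz K →L[K] Cz K)} (hP : ∀ i x, P i x = (pr x (y i) / pr (y i) (y i)) • y i)
    {lam : ℕ → K} (hsum : Summable fun i => lam i • P i) :
    (∑' i, lam i • P i) (y j) = lam j • y j := by
  have hpr : pr (y j) (y j) ≠ 0 := by
    rw [← norm_ne_zero_iff, norm_pr_self hna hres]
    exact pow_ne_zero 2 (norm_ne_zero_iff.2 hyj)
  rw [ContinuousLinearMap.tsum_apply hsum, tsum_eq_single j fun i hij => ?_]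
  · simp [hP, div_self hpr]
  · simp [hP, hy j i hij.symm]

theorem norm_tsum_smul_le (hna : IsNonarchimedean (norm : K → ℝ))
    (hres : FormallyRealRing (Residue hna)) {y : ℕ → Cz K} {P : ℕ → (Cz K →L[K] Cz K)}
    (hP : ∀ i x, P i x = (pr x (y i) / pr (y i) (y i)) • y i) {lam : Cz K}
    (hsum : Summable fun i => lam i • P i) : ‖∑' i, lam i • P i‖ ≤ ‖lam‖ := by
  have := IsUltrametricDist.isUltrametricDist_of_isNonarchimedean_norm hna
  refine ContinuousLinearMap.opNorm_le_bound _ (norm_nonneg _) fun x => ?_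
  rw [ContinuousLinearMap.tsum_apply hsum]
  refine IsUltrametricDist.norm_tsum_le_of_forall_le_of_nonneg (by positivity) fun i => ?_
  rw [smul_apply, norm_smul, hP]
  exact mul_le_mul (Cz.norm_apply_le lam i) (norm_pr_div_smul_le hna hres x (y i))
    (norm_nonneg _) (norm_nonneg _)

end Projections

theorem stmt13_general {K : Type} [NontriviallyNormedField K] [CompleteSpace K]
    (hna : IsNonarchimedean (norm : K → ℝ))
    (hres : FormallyRealRing (Residue hna))
    (y : ℕ → Cz K) (hy : ∀ i j, i ≠ j → pr (y i) (y j) = 0) (hy1 : ∀ i, ‖y i‖ = 1)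
    (P : ℕ → (Cz K →L[K] Cz K))
    (hP : ∀ i x, P i x = (pr x (y i) / pr (y i) (y i)) • y i)
    (α : K) (lam : Cz K) (hsum : Summable fun i => lam i • P i)
    (n : ℕ) :
    ‖(α • (1 : Cz K →L[K] Cz K) + ∑' i, lam i • P i) ^ n‖ =
      ‖α • (1 : Cz K →L[K] Cz K) + ∑' i, lam i • P i‖ ^ n := by
  have := IsUltrametricDist.isUltrametricDist_of_isNonarchimedean_norm hna
  have hy0 : ∀ i, y i ≠ 0 := fun i => norm_ne_zero_iff.1 (by simp [hy1])
  obtain ⟨j, hj⟩ := Cz.exists_max_norm_le_norm_add_apply α lam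
  refine ContinuousLinearMap.norm_pow_eq_pow_norm_of_apply_eq_smul (μ := α + lam j) (hy0 j) ?_ ?_ n
  · rw [add_apply, tsum_smul_apply_eq_smul_of_orthogonal hna hres hy (hy0 j) hP hsum, add_smul]
    rfl
  · calc _ ≤ max ‖α‖ ‖∑' i, lam i • P i‖ := ContinuousLinearMap.norm_smul_one_add_le_max _ _
      _ ≤ max ‖α‖ ‖lam‖ := max_le_max le_rfl (norm_tsum_smul_le hna hres hP hsum)
      _ ≤ ‖α + lam j‖ := hj

theorem stmt13 {K : Type} [NontriviallyNormedField K] [CompleteSpace K]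
    (hna : IsNonarchimedean (norm : K → ℝ))
    (hres : FormallyRealRing (Residue hna))
    (y : ℕ → Cz K) (hy : ∀ i j, i ≠ j → pr (y i) (y j) = 0) (hy1 : ∀ i, ‖y i‖ = 1)
    (P : ℕ → (Cz K →L[K] Cz K))
    (hP : ∀ i x, P i x = (pr x (y i) / pr (y i) (y i)) • y i)
    (α : K) (lam : Cz K) (hsum : Summable fun i => lam i • P i)
    (n : ℕ) (hn : 1 ≤ n) :
    ‖(α • (1 : Cz K →L[K] Cz K) + ∑' i, lam i • P i) ^ n‖ =
      ‖α • (1 : Cz K →L[K] Cz K) + ∑' i, lam i • P i‖ ^ n :=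
  stmt13_general hna hres y hy hy1 P hP α lam hsum n
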